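/- Let w(z) := sech(πz/4) and h(z) := z·w(z). Then h ∈ L²(ℝ), h' ∈ L²(ℝ), h is not identically zero, and for every z ∈ ℝ one has h'(z) + (π/4)·tanh(πz/4)·h(z) + (π/4)·w(z)·∫_ℝ w'(s)·h(s) ds = 0. In particular 0 is an eigenvalue of the operator D₀. -/

import Mathlib

open Real MeasureTheory

noncomputable def w (z : ℝ) : ℝ := 1 / Real.cosh (π * z / 4)

/-!
Since `w' = -(π/4) tanh(πz/4) w`, the function `h = z w` satisfies
`h' + (π/4) tanh(πz/4) h = w`, so the equation reduces to `∫ w' h = -4/π`.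
As `(tanh(πs/4))' = (π/4) w(s)²`, a primitive of `w' h = s w w'` is
`s w(s)²/2 - (2/π) tanh(πs/4)`, whose limits at `∓∞` are `±2/π`.
All integrability comes from the decay `(1 + z²) w(z) ≤ 8`, a consequence of
`cosh x ≥ 1 + x²/2`.
-/

open Filter Topology

namespace Real

lemma one_add_sq_div_two_le_cosh (x : ℝ) : 1 + x ^ 2 / 2 ≤ cosh x := by
  have hsinh : |x / 2| ≤ |sinh (x / 2)| := by
    rw [abs_sinh]
    exact self_le_sinh_iff.2 (abs_nonneg _)
  have hcosh : cosh x = cosh (x / 2) ^ 2 + sinh (x / 2) ^ 2 := by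
    rw [← cosh_two_mul, mul_div_cancel₀ x two_ne_zero]
  nlinarith [sq_le_sq.2 hsinh, cosh_sq' (x / 2)]

lemma hasDerivAt_tanh (x : ℝ) : HasDerivAt tanh (1 / cosh x ^ 2) x := by
  have h := (hasDerivAt_sinh x).div (hasDerivAt_cosh x) (cosh_pos x).ne'
  refine (h.congr_of_eventuallyEq (.of_forall fun y => tanh_eq_sinh_div_cosh y)).congr_deriv ?_
  rw [← cosh_sq_sub_sinh_sq x]
  ring

lemma tanh_eq_one_sub (x : ℝ) : tanh x = 1 - 2 / (exp (2 * x) + 1) := by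
  rw [tanh_eq_sinh_div_cosh, sinh_eq, cosh_eq, exp_neg, two_mul, exp_add]
  field_simp
  ring

lemma tendsto_tanh_atTop : Tendsto tanh atTop (𝓝 1) := by
  have h : Tendsto (fun x => 2 / (exp (2 * x) + 1)) atTop (𝓝 0) :=
    (tendsto_atTop_add_const_right _ 1
      (tendsto_exp_atTop.comp (tendsto_id.const_mul_atTop two_pos))).const_div_atTop 2
  simpa [← tanh_eq_one_sub] using (tendsto_const_nhds (x := (1 : ℝ))).sub h

lemma tendsto_tanh_atBot : Tendsto tanh atBot (𝓝 (-1)) := by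
  simpa [Function.comp_def] using (tendsto_tanh_atTop.comp tendsto_neg_atBot_atTop).neg

end Real

lemma tendsto_inv_one_add_sq_cocompact :
    Tendsto (fun x : ℝ => (1 + x ^ 2)⁻¹) (cocompact ℝ) (𝓝 0) := by
  have h := (tendsto_pow_atTop two_ne_zero).comp (tendsto_norm_cocompact_atTop (E := ℝ))
  simpa [Function.comp_def] using tendsto_inv_atTop_zero.comp (tendsto_atTop_add_const_left _ 1 h)

lemma memLp_two_of_sq_norm_le {α E : Type*} [MeasurableSpace α] {μ : Measure α}
    [NormedAddCommGroup E] {g : α → E} {f : α → ℝ} (hg : AEStronglyMeasurable g μ)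
    (hf : Integrable f μ) (hle : ∀ x, ‖g x‖ ^ 2 ≤ f x) : MemLp g 2 μ :=
  (memLp_two_iff_integrable_sq_norm hg).2 <|
    hf.mono' (hg.norm.pow 2) (.of_forall fun x => by simpa using hle x)

lemma w_pos (z : ℝ) : 0 < w z :=
  one_div_pos.2 (cosh_pos _)

lemma hasDerivAt_pi_mul_div_four (z : ℝ) : HasDerivAt (fun z => π * z / 4) (π / 4) z := by
  simpa using ((hasDerivAt_id z).const_mul π).div_const 4

lemma abs_pi_div_four_mul_tanh_le_one (x : ℝ) : |π / 4 * tanh x| ≤ 1 := by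
  rw [abs_mul, abs_of_pos (by positivity)]
  nlinarith [pi_lt_four, abs_tanh_lt_one x, abs_nonneg (tanh x)]

lemma hasDerivAt_w (z : ℝ) : HasDerivAt w (-(π / 4) * tanh (π * z / 4) * w z) z := by
  have h := ((hasDerivAt_cosh _).comp z (hasDerivAt_pi_mul_div_four z)).inv (cosh_pos _).ne'
  refine (h.congr_of_eventuallyEq (.of_forall fun y => one_div _)).congr_deriv ?_
  have hc := (cosh_pos (π * z / 4)).ne'
  rw [w, tanh_eq_sinh_div_cosh, Function.comp_apply]
  field_simp

@[fun_prop]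
lemma continuous_w : Continuous w :=
  continuous_iff_continuousAt.2 fun z => (hasDerivAt_w z).continuousAt

lemma one_add_sq_mul_w_le (z : ℝ) : (1 + z ^ 2) * w z ≤ 8 := by
  have hcosh := one_add_sq_div_two_le_cosh (π * z / 4)
  have hπ : 9 ≤ π ^ 2 := by nlinarith [pi_gt_three]
  rw [w, mul_one_div, div_le_iff₀ (cosh_pos _)]
  nlinarith [mul_le_mul_of_nonneg_right hπ (sq_nonneg z)]

lemma one_add_sq_mul_w_sq_le (z : ℝ) : (1 + z ^ 2) * w z ^ 2 ≤ 64 * (1 + z ^ 2)⁻¹ := by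
  have h := one_add_sq_mul_w_le z
  rw [le_mul_inv_iff₀ (by positivity)]
  calc (1 + z ^ 2) * w z ^ 2 * (1 + z ^ 2) = ((1 + z ^ 2) * w z) ^ 2 := by ring
    _ ≤ 8 ^ 2 := pow_le_pow_left₀ (by have := w_pos z; positivity) h 2
    _ = 64 := by norm_num

lemma integrable_one_add_sq_mul_w_sq : Integrable fun z => (1 + z ^ 2) * w z ^ 2 :=
  (integrable_inv_one_add_sq.const_mul 64).mono' (by fun_prop)
    (.of_forall fun z => by
      rw [norm_of_nonneg (by positivity)]
      exact one_add_sq_mul_w_sq_le z)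

lemma tendsto_mul_w_sq_cocompact : Tendsto (fun s => s * w s ^ 2) (cocompact ℝ) (𝓝 0) := by
  refine squeeze_zero_norm (fun s => ?_)
    (by simpa using tendsto_inv_one_add_sq_cocompact.const_mul 64)
  rw [norm_mul, norm_pow, norm_of_nonneg (w_pos s).le, Real.norm_eq_abs]
  refine le_trans ?_ (one_add_sq_mul_w_sq_le s)
  gcongr
  nlinarith [abs_nonneg s, sq_abs s]

lemma hasDerivAt_mul_w (z : ℝ) :
    HasDerivAt (fun z => z * w z) (w z - π / 4 * tanh (π * z / 4) * (z * w z)) z :=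
  ((hasDerivAt_id z).mul (hasDerivAt_w z)).congr_deriv (by simp only [id]; ring)

lemma sq_deriv_mul_w_le (z : ℝ) :
    (w z - π / 4 * tanh (π * z / 4) * (z * w z)) ^ 2 ≤ 2 * ((1 + z ^ 2) * w z ^ 2) := by
  set a := π / 4 * tanh (π * z / 4)
  have ha : a ^ 2 ≤ 1 := (sq_le_one_iff_abs_le_one a).2 (abs_pi_div_four_mul_tanh_le_one _)
  calc (w z - a * (z * w z)) ^ 2 = (1 - a * z) ^ 2 * w z ^ 2 := by ring
    _ ≤ 2 * (1 + z ^ 2) * w z ^ 2 := by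
      gcongr
      nlinarith [sq_nonneg (1 + a * z), mul_le_mul_of_nonneg_right ha (sq_nonneg z)]
    _ = 2 * ((1 + z ^ 2) * w z ^ 2) := by ring

lemma abs_deriv_w_mul_le (s : ℝ) : |deriv w s * (s * w s)| ≤ (1 + s ^ 2) * w s ^ 2 := by
  have ha := abs_pi_div_four_mul_tanh_le_one (π * s / 4)
  have hs : |s| ≤ 1 + s ^ 2 := by nlinarith [abs_nonneg s, sq_abs s]
  calc |deriv w s * (s * w s)| = |π / 4 * tanh (π * s / 4)| * |s| * w s ^ 2 := by
        rw [(hasDerivAt_w s).deriv, ← abs_of_nonneg (sq_nonneg (w s)), ← abs_neg, ← abs_mul,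
          ← abs_mul]
        ring_nf
    _ ≤ 1 * (1 + s ^ 2) * w s ^ 2 := by gcongr
    _ = (1 + s ^ 2) * w s ^ 2 := by ring

lemma hasDerivAt_mul_w_sq_div_two_sub_tanh (s : ℝ) :
    HasDerivAt (fun s => s * w s ^ 2 / 2 - 2 / π * tanh (π * s / 4))
      (deriv w s * (s * w s)) s := by
  have h1 := ((hasDerivAt_id s).mul ((hasDerivAt_w s).pow 2)).div_const 2
  have h2 := ((hasDerivAt_tanh _).comp s (hasDerivAt_pi_mul_div_four s)).const_mul (2 / π)
  refine (h1.sub h2).congr_deriv ?_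
  have hw : 1 / cosh (π * s / 4) ^ 2 = w s ^ 2 := by rw [w, div_pow, one_pow]
  rw [(hasDerivAt_w s).deriv, hw]
  simp only [Pi.pow_apply, id]
  field_simp
  ring

lemma integral_deriv_w_mul : ∫ s, deriv w s * (s * w s) = -4 / π := by
  have hint : Integrable fun s => deriv w s * (s * w s) :=
    integrable_one_add_sq_mul_w_sq.mono'
      ((measurable_deriv w).aestronglyMeasurable.mul (by fun_prop)) (.of_forall abs_deriv_w_mul_le)
  have htop := ((tendsto_mul_w_sq_cocompact.mono_left atTop_le_cocompact).div_const 2).sub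
    ((tendsto_tanh_atTop.comp
      ((tendsto_id.const_mul_atTop pi_pos).atTop_div_const four_pos)).const_mul (2 / π))
  have hbot := ((tendsto_mul_w_sq_cocompact.mono_left atBot_le_cocompact).div_const 2).sub
    ((tendsto_tanh_atBot.comp
      ((tendsto_id.const_mul_atBot pi_pos).atBot_div_const four_pos)).const_mul (2 / π))
  rw [integral_of_hasDerivAt_of_tendsto hasDerivAt_mul_w_sq_div_two_sub_tanh hint hbot htop]
  ring

theorem zero_eigenvalue :
    MemLp (fun z : ℝ => ((z * w z : ℝ) : ℂ)) 2 volume ∧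
    MemLp (deriv (fun z : ℝ => ((z * w z : ℝ) : ℂ))) 2 volume ∧
    (∃ z : ℝ, ((z * w z : ℝ) : ℂ) ≠ 0) ∧
    ∀ z : ℝ, deriv (fun z : ℝ => ((z * w z : ℝ) : ℂ)) z
        + ((π / 4 * Real.tanh (π * z / 4) : ℝ) : ℂ) * ((z * w z : ℝ) : ℂ)
        + ((π / 4 * w z : ℝ) : ℂ) * ∫ s : ℝ, ((deriv w s : ℝ) : ℂ) * ((s * w s : ℝ) : ℂ)
      = 0 := by
  have hderiv : deriv (fun z : ℝ => ((z * w z : ℝ) : ℂ))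
      = fun z => ((w z - π / 4 * tanh (π * z / 4) * (z * w z) : ℝ) : ℂ) :=
    funext fun z => (hasDerivAt_mul_w z).ofReal_comp.deriv
  have hintegral :
      ∫ s : ℝ, ((deriv w s : ℝ) : ℂ) * ((s * w s : ℝ) : ℂ) = ((-4 / π : ℝ) : ℂ) := by
    simp_rw [← Complex.ofReal_mul]
    rw [integral_complex_ofReal, integral_deriv_w_mul]
  refine ⟨?_, ?_, ⟨1, by simp [(w_pos 1).ne']⟩, fun z => ?_⟩
  · refine memLp_two_of_sq_norm_le (by fun_prop) integrable_one_add_sq_mul_w_sq fun z => ?_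
    rw [Complex.norm_real, Real.norm_eq_abs, sq_abs]
    nlinarith [sq_nonneg (w z)]
  · refine memLp_two_of_sq_norm_le (measurable_deriv _).aestronglyMeasurable
      (integrable_one_add_sq_mul_w_sq.const_mul 2) fun z => ?_
    rw [hderiv, Complex.norm_real, Real.norm_eq_abs, sq_abs]
    exact sq_deriv_mul_w_le z
  · rw [hderiv, hintegral]
    have hπ := pi_ne_zero
    push_cast
    field_simp
    ring
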